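/- For every real number s, the assignment ψ^s(g)([a : b]) = [r·a + s·y·b : r⁻¹·b], for g = [[r, y], [0, r⁻¹]] in the Borel subgroup G of SL(2, ℝ), is well defined on the real projective line ℝP¹ (it is induced by the invertible linear map (a, b) ↦ (r·a + s·y·b, r⁻¹·b) of ℝ²), each ψ^s(g) is a bijection of ℝP¹, and ψ^s : G → Perm(ℝP¹) is a group homomorphism, i.e. a G-action on ℝP¹. -/

import Mathlib

open Matrix

/-- `SL(2, ℝ)`, the group of 2×2 real matrices of determinant 1. -/
abbrev SL2R := Matrix.SpecialLinearGroup (Fin 2) ℝ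

/-- The Borel subgroup `G` of `SL(2, ℝ)` consisting of the matrices
`[[r, y], [0, r⁻¹]]` with `r ∈ ℝ` nonzero and `y ∈ ℝ`. -/
def BorelSL2 : Subgroup SL2R where
  carrier := {A | ∃ r y : ℝ, r ≠ 0 ∧ (A : Matrix (Fin 2) (Fin 2) ℝ) = !![r, y; 0, r⁻¹]}
  one_mem' := ⟨1, 0, one_ne_zero, by rw [inv_one, Matrix.SpecialLinearGroup.coe_one, Matrix.one_fin_two]⟩
  mul_mem' := by
    rintro A B ⟨r, y, hr, hA⟩ ⟨r', y', hr', hB⟩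
    refine ⟨r * r', r * y' + y * r'⁻¹, mul_ne_zero hr hr', ?_⟩
    rw [Matrix.SpecialLinearGroup.coe_mul, hA, hB, Matrix.mul_fin_two, mul_inv]
    ext i j
    fin_cases i <;> fin_cases j <;> norm_num
  inv_mem' := by
    rintro A ⟨r, y, hr, hA⟩
    refine ⟨r⁻¹, -y, inv_ne_zero hr, ?_⟩
    rw [Matrix.SpecialLinearGroup.coe_inv, hA, Matrix.adjugate_fin_two, inv_inv]
    ext i j
    fin_cases i <;> fin_cases j <;> norm_num

/-- The real projective line `ℝP¹`: the projectivization of `ℝ²`. -/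
abbrev RP1 := Projectivization ℝ (ℝ × ℝ)

/-! `ψ^s(g)` is induced by the matrix `[[r, s y], [0, r⁻¹]]`, of determinant `1`. The assignment
`g ↦ [[r, s y], [0, r⁻¹]]` is multiplicative on the Borel subgroup because the top-right entry
`r y' + y r'⁻¹` of a product of upper triangular matrices is linear in the top-right entries, so
composing it with the linear action of `GL(ℝ²)` on `ℝP¹` gives the homomorphism `ψ^s`. -/

namespace Matrix

section CommSemiring

variable {R : Type*} [CommSemiring R]

def scaleTopRight (s : R) (A : Matrix (Fin 2) (Fin 2) R) : Matrix (Fin 2) (Fin 2) R :=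
  !![A 0 0, s * A 0 1; 0, A 1 1]

theorem scaleTopRight_one (s : R) : scaleTopRight s (1 : Matrix (Fin 2) (Fin 2) R) = 1 := by
  simp [scaleTopRight, one_fin_two]

theorem scaleTopRight_mul (s : R) {A B : Matrix (Fin 2) (Fin 2) R} (hA : A 1 0 = 0)
    (hB : B 1 0 = 0) : scaleTopRight s (A * B) = scaleTopRight s A * scaleTopRight s B := by
  ext i j
  fin_cases i <;> fin_cases j <;> simp [scaleTopRight, mul_apply, hA, hB]
  ring

theorem coe_toLin_finTwoProd_upper (a b d : R) :
    ⇑(toLin (Module.Basis.finTwoProd R) (Module.Basis.finTwoProd R) !![a, b; 0, d]) =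
      fun p => (a * p.1 + b * p.2, d * p.2) :=
  funext fun p => by simp

end CommSemiring

theorem bijective_toLin_of_isUnit_det {R n M : Type*} [CommRing R] [Fintype n] [DecidableEq n]
    [AddCommMonoid M] [Module R M] (b : Module.Basis n R M) {A : Matrix n n R}
    (hA : IsUnit A.det) : Function.Bijective (toLin b b A) :=
  (Module.End.isUnit_iff _).mp ((isUnit_toLin_iff b).mpr ((isUnit_iff_isUnit_det A).mpr hA))

end Matrix

theorem BorelSL2.coe_apply_one_zero (g : BorelSL2) :
    ((g : SL2R) : Matrix (Fin 2) (Fin 2) ℝ) 1 0 = 0 := by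
  obtain ⟨r, y, -, hg⟩ := g.2
  simp [hg]

def borelTwist (s : ℝ) : BorelSL2 →* Matrix (Fin 2) (Fin 2) ℝ where
  toFun g := scaleTopRight s g
  map_one' := scaleTopRight_one s
  map_mul' g h := scaleTopRight_mul s (BorelSL2.coe_apply_one_zero g)
    (BorelSL2.coe_apply_one_zero h)

noncomputable def borelPsi (s : ℝ) : BorelSL2 →* Equiv.Perm RP1 :=
  (MulAction.toPermHom (LinearMap.GeneralLinearGroup ℝ (ℝ × ℝ)) RP1).comp
    ((toLinAlgEquiv (Module.Basis.finTwoProd ℝ)).toMonoidHom.comp (borelTwist s)).toHomUnits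

theorem borelPsi_mk (s : ℝ) (g : BorelSL2) {v : ℝ × ℝ} (hv : v ≠ 0)
    (hv' : toLin (Module.Basis.finTwoProd ℝ) (Module.Basis.finTwoProd ℝ) (borelTwist s g) v ≠ 0) :
    borelPsi s g (Projectivization.mk ℝ v hv) = Projectivization.mk ℝ _ hv' :=
  Projectivization.smul_mk _ hv

/-- For every real `s`, the assignment `ψ^s(g)([a : b]) = [r·a + s·y·b : r⁻¹·b]`, for
`g = [[r, y], [0, r⁻¹]]` in the Borel subgroup `G` of `SL(2, ℝ)`, is well defined on
the real projective line `ℝP¹` (it is induced by the invertible linear map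
`(a, b) ↦ (r·a + s·y·b, r⁻¹·b)` of `ℝ²`), each `ψ^s(g)` is a bijection of `ℝP¹`, and
`ψ^s : G → Perm(ℝP¹)` is a group homomorphism, i.e. a `G`-action on `ℝP¹`. -/
theorem psi_action (s : ℝ) :
    (∀ r y : ℝ, r ≠ 0 →
      Function.Bijective (fun p : ℝ × ℝ => (r * p.1 + s * y * p.2, r⁻¹ * p.2))) ∧
    ∃ ψ : BorelSL2 →* Equiv.Perm RP1,
      ∀ (g : BorelSL2) (r y : ℝ), r ≠ 0 →
        ((g : SL2R) : Matrix (Fin 2) (Fin 2) ℝ) = !![r, y; 0, r⁻¹] →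
        ∀ (a b : ℝ) (hab : (a, b) ≠ (0 : ℝ × ℝ))
          (hab' : (r * a + s * y * b, r⁻¹ * b) ≠ (0 : ℝ × ℝ)),
          ψ g (Projectivization.mk ℝ (a, b) hab)
            = Projectivization.mk ℝ (r * a + s * y * b, r⁻¹ * b) hab' := by
  refine ⟨fun r y hr => ?_, borelPsi s, fun g r y _ hg a b hab hab' => ?_⟩
  · have hdet : IsUnit (!![r, s * y; 0, r⁻¹] : Matrix (Fin 2) (Fin 2) ℝ).det := by simp [hr]
    rw [← coe_toLin_finTwoProd_upper]
    exact bijective_toLin_of_isUnit_det (Module.Basis.finTwoProd ℝ) hdet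
  · have hmat : borelTwist s g = !![r, s * y; 0, r⁻¹] := by
      simp [borelTwist, scaleTopRight, hg]
    rw [borelPsi_mk s g hab (by rwa [hmat, coe_toLin_finTwoProd_upper])]
    simp only [hmat, coe_toLin_finTwoProd_upper]
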